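/- Let V be a Poisson algebra over a field F. For every x ∈ V, the inner multiplier Inn(x) = (x·−, −·x, [x,−]) belongs to [V], and the linear map Inn : V → [V] preserves both operations: Inn(x·y) = Inn(x)·Inn(y) and Inn([x,y]) = [Inn(x), Inn(y)], where (f,F,d)·(f',F',d') = (f∘f', F'∘F, f∘d' + F'∘d) and [(f,F,d),(f',F',d')] = (f∘d' − d'∘f, F∘d' − d'∘F, d∘d' − d'∘d). -/
import Mathlib


/-- Membership in `[V]` for a Poisson algebra `(V, m, b)`: `(f, F, d)` is such
that `(f, F)` is a bimultiplier of `(V, ·)`, `d` is a derivation of the Lie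
algebra `(V, [-,-])`, and conditions (V1), (V2), (V3) hold. -/
def MemBrV {K V : Type*} [Field K] [AddCommGroup V] [Module K V]
    (m b : V →ₗ[K] V →ₗ[K] V) (f F d : V →ₗ[K] V) : Prop :=
  (∀ x y : V, f (m x y) = m (f x) y) ∧
  (∀ x y : V, F (m x y) = m x (F y)) ∧
  (∀ x y : V, m x (f y) = m (F x) y) ∧
  (∀ x y : V, d (b x y) = b (d x) y + b x (d y)) ∧
  (∀ x y : V, f (b x y) = b (f x) y - m (d y) x) ∧
  (∀ x y : V, F (b x y) = b (F x) y - m x (d y)) ∧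
  (∀ x y : V, d (m x y) = m (d x) y + m x (d y))

/-- For a Poisson algebra `V`, every inner multiplier
`Inn(x) = (x·−, −·x, [x,−])` belongs to `[V]`, and `Inn` preserves both
operations of `[V]`: `Inn(x·y) = Inn(x)·Inn(y)` and
`Inn([x,y]) = [Inn(x), Inn(y)]`, where
`(f,F,d)·(f',F',d') = (f∘f', F'∘F, f∘d' + F'∘d)` and
`[(f,F,d),(f',F',d')] = (f∘d' − d'∘f, F∘d' − d'∘F, d∘d' − d'∘d)`. -/
theorem inner_multiplier_morphism
    (K V : Type*) [Field K] [AddCommGroup V] [Module K V]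
    (m b : V →ₗ[K] V →ₗ[K] V)
    (hassoc : ∀ x y z : V, m (m x y) z = m x (m y z))
    (halt : ∀ x : V, b x x = 0)
    (hjac : ∀ x y z : V, b (b x y) z + b (b y z) x + b (b z x) y = 0)
    (hpois : ∀ x y z : V, b x (m y z) = m (b x y) z + m y (b x z)) :
    (∀ x : V, MemBrV m b (m x) (m.flip x) (b x)) ∧
    (∀ x y : V,
      m (m x y) = m x ∘ₗ m y ∧
      m.flip (m x y) = m.flip y ∘ₗ m.flip x ∧
      b (m x y) = m x ∘ₗ b y + m.flip y ∘ₗ b x) ∧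
    (∀ x y : V,
      m (b x y) = m x ∘ₗ b y - b y ∘ₗ m x ∧
      m.flip (b x y) = m.flip x ∘ₗ b y - b y ∘ₗ m.flip x ∧
      b (b x y) = b x ∘ₗ b y - b y ∘ₗ b x) := by
  have hanti : ∀ x y : V, b x y = - b y x := by
    intro x y
    have h := halt (x + y)
    simp only [map_add, LinearMap.add_apply, halt, zero_add, add_zero] at h
    exact eq_neg_of_add_eq_zero_right h
  -- bracket with a product in the first slot
  have hL : ∀ x y z : V, b (m x y) z = m (b x z) y + m x (b y z) := by
    intro x y z
    have h := hpois z x y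
    rw [hanti z x, hanti z y] at h
    rw [hanti (m x y) z, h]
    simp only [map_neg, LinearMap.neg_apply, neg_add, neg_neg]
  -- Jacobi rearranged
  have hJ : ∀ x y z : V, b x (b y z) = b (b x y) z + b y (b x z) := by
    intro x y z
    have h := hjac x y z
    rw [hanti (b y z) x, hanti z x] at h
    have h2 : b (b x z) y = - b y (b x z) := hanti _ _
    rw [map_neg, LinearMap.neg_apply, h2] at h
    refine eq_of_sub_eq_zero (neg_injective ?_)
    rw [neg_zero, ← h]; abel
  refine ⟨?_, ?_, ?_⟩
  · intro x
    refine ⟨fun y z => (hassoc x y z).symm, fun y z => ?_, fun y z => ?_,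
      fun y z => hJ x y z, fun y z => ?_, fun y z => ?_, fun y z => hpois x y z⟩
    · simp only [LinearMap.flip_apply]; exact hassoc y z x
    · simp only [LinearMap.flip_apply]; exact (hassoc y x z).symm
    · rw [hL x y z]; abel
    · simp only [LinearMap.flip_apply]; rw [hL y x z]; abel
  · intro x y
    refine ⟨?_, ?_, ?_⟩ <;> ext z <;>
      simp only [LinearMap.comp_apply, LinearMap.add_apply, LinearMap.flip_apply]
    · exact hassoc x y z
    · exact (hassoc z x y).symm
    · rw [hL x y z]; abel
  · intro x y
    refine ⟨?_, ?_, ?_⟩ <;> ext z <;>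
      simp only [LinearMap.comp_apply, LinearMap.sub_apply, LinearMap.flip_apply]
    · have h : m (b y x) z = - m (b x y) z := by
        rw [hanti y x]; simp only [map_neg, LinearMap.neg_apply]
      rw [hpois y x z, h]; abel
    · have h : m z (b y x) = - m z (b x y) := by
        rw [hanti y x]; simp only [map_neg]
      rw [hpois y z x, h]; abel
    · rw [hJ x y z]; abel
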